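/- Let h > 0 and let z ∈ ℂ satisfy Im z > 0. Then the operator −Δ_h − z·I on ℓ²(ℤ, ℂ) is boundedly invertible, and its inverse is the convolution operator with kernel r_h: for every φ ∈ ℓ²(ℤ, ℂ) and every n ∈ ℤ, ((−Δ_h − z·I)⁻¹ φ)(n) = ∑_{m ∈ ℤ} r_h(z, n − m) · φ(m), the series on the right converging absolutely. -/

import Mathlib

/-- Principal complex square root `w^{1/2} = exp((1/2)·Log w)`. -/
noncomputable def csqrt (w : ℂ) : ℂ := Complex.exp ((1 / 2 : ℂ) * Complex.log w)

/-- Principal complex arcsine `Arcsin s = −i·Log(i·s + (1 − s²)^{1/2})`. -/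
noncomputable def carcsin (s : ℂ) : ℂ :=
  -Complex.I * Complex.log (Complex.I * s + csqrt (1 - s ^ 2))

/-- The resolvent kernel
`r_h(z, k) = i·exp(2·i·|k|·Arcsin((h/2)·z^{1/2})) / (z^{1/2}·(4/h² − z)^{1/2})`. -/
noncomputable def rker (h : ℝ) (z : ℂ) (k : ℤ) : ℂ :=
  Complex.I * Complex.exp (2 * Complex.I * ((|k| : ℤ) : ℂ) * carcsin ((h / 2 : ℂ) * csqrt z)) /
    (csqrt z * csqrt (4 / (h : ℂ) ^ 2 - z))

/-!
With `s = (h/2)·z^{1/2}` and `u = i·s + (1 − s²)^{1/2}`, the kernel is `r_h(z, k) = C·q^|k|` with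
`q = u²`: the root inside the unit disc of `q + q⁻¹ = 2 − h²z`, normalised by `C·(q⁻¹ − q) = h²`.
The characteristic equation makes `r_h` solve `(−Δ_h − z) r_h = 0` away from `k = 0`, and the
normalisation gives the unit jump at `0`. Since `r_h` is summable and translations are isometries of
`ℓ²`, `R = ∑ r_h(k)·Uᵏ` (`U` the unit shift) converges in operator norm, and since
`−Δ_h − z = (2/h² − z) − h⁻²(U + U⁻¹)`, multiplying the Laurent series termwise shows that `R` is
a two-sided inverse.
-/

open scoped ENNReal

lemma csqrt_ne_zero (w : ℂ) : csqrt w ≠ 0 := Complex.exp_ne_zero _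

lemma csqrt_sq {w : ℂ} (hw : w ≠ 0) : csqrt w ^ 2 = w := by
  rw [csqrt, ← Complex.exp_nat_mul]
  conv_rhs => rw [← Complex.exp_log hw]
  congr 1
  push_cast
  ring

lemma csqrt_re_pos {w : ℂ} (hw : w ∈ Complex.slitPlane) : 0 < (csqrt w).re := by
  have harg : w.arg < Real.pi :=
    (Complex.arg_le_pi w).lt_of_ne (Complex.slitPlane_arg_ne_pi hw)
  have harg' := Complex.neg_pi_lt_arg w
  have him : ((1 / 2 : ℂ) * Complex.log w).im = w.arg / 2 := by
    simp [Complex.log_im]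
    ring
  rw [csqrt, Complex.exp_re, him]
  exact mul_pos (Real.exp_pos _) (Real.cos_pos_of_mem_Ioo ⟨by linarith, by linarith⟩)

lemma im_eq_two_mul_re_mul_im_csqrt {w : ℂ} (hw : w ≠ 0) :
    w.im = 2 * (csqrt w).re * (csqrt w).im := by
  conv_lhs => rw [← csqrt_sq hw]
  simp only [sq, Complex.mul_im]
  ring

lemma csqrt_ofReal_mul {t : ℝ} (ht : 0 < t) {w : ℂ} (hw : w ≠ 0) :
    csqrt (t * w) = Real.sqrt t * csqrt w := by
  rw [csqrt, csqrt, Complex.log_ofReal_mul ht hw, mul_add, Complex.exp_add,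
    Real.sqrt_eq_rpow, Real.rpow_def_of_pos ht, Complex.ofReal_exp]
  push_cast
  ring_nf

lemma pow_natAbs_add_pow_natAbs {K : Type*} [Field K] {q : K} (hq : q ≠ 0) (k : ℤ) :
    q ^ (k + 1).natAbs + q ^ (k - 1).natAbs
      = (q + q⁻¹) * q ^ k.natAbs + if k = 0 then q - q⁻¹ else 0 := by
  rcases lt_trichotomy k 0 with hk | rfl | hk
  · obtain ⟨n, rfl⟩ : ∃ n : ℕ, k = -(n + 1) := ⟨(-k - 1).toNat, by omega⟩
    rw [if_neg hk.ne, show (-(n + 1 : ℤ) + 1).natAbs = n by omega,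
      show (-(n + 1 : ℤ) - 1).natAbs = n + 2 by omega, show (-(n + 1 : ℤ)).natAbs = n + 1 by omega]
    field_simp
    ring
  · simp
  · obtain ⟨n, rfl⟩ : ∃ n : ℕ, k = n + 1 := ⟨(k - 1).toNat, by omega⟩
    rw [if_neg hk.ne', show (n + 1 + 1 : ℤ).natAbs = n + 2 by omega,
      show (n + 1 - 1 : ℤ).natAbs = n by omega, show (n + 1 : ℤ).natAbs = n + 1 by omega]
    field_simp
    ring

lemma norm_I_mul_add_lt_one {s a : ℂ} (hs_re : 0 < s.re) (hs_im : 0 < s.im) (ha_re : 0 < a.re)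
    (ha_im : a.im < 0) (hsa : a ^ 2 = 1 - s ^ 2) : ‖Complex.I * s + a‖ < 1 := by
  have hprod : Complex.normSq (Complex.I * s + a) * Complex.normSq (a - Complex.I * s) = 1 := by
    rw [← Complex.normSq_mul, show (Complex.I * s + a) * (a - Complex.I * s) = 1 by
      linear_combination hsa - s ^ 2 * Complex.I_sq, Complex.normSq_one]
  have hlt : Complex.normSq (Complex.I * s + a) < Complex.normSq (a - Complex.I * s) := by
    simp only [Complex.normSq_apply, Complex.add_re, Complex.add_im, Complex.sub_re,
      Complex.sub_im, Complex.mul_re, Complex.mul_im, Complex.I_re, Complex.I_im]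
    nlinarith
  have hnn := Complex.normSq_nonneg (Complex.I * s + a)
  rw [← sq_lt_one_iff₀ (norm_nonneg _), Complex.sq_norm]
  nlinarith

lemma exp_two_mul_I_mul_carcsin {s : ℂ} (hs : Complex.I * s + csqrt (1 - s ^ 2) ≠ 0) (n : ℕ) :
    Complex.exp (2 * Complex.I * n * carcsin s)
      = ((Complex.I * s + csqrt (1 - s ^ 2)) ^ 2) ^ n := by
  have hexp : 2 * Complex.I * n * carcsin s
      = ((2 * n : ℕ) : ℂ) * Complex.log (Complex.I * s + csqrt (1 - s ^ 2)) := by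
    rw [carcsin]
    push_cast
    linear_combination (-2 * n * Complex.log (Complex.I * s + csqrt (1 - s ^ 2))) * Complex.I_sq
  rw [hexp, Complex.exp_nat_mul, Complex.exp_log hs, pow_mul]

lemma csqrt_one_sub_sq_half_mul_csqrt {h : ℝ} (hh : 0 < h) {z : ℂ} (hz : z ≠ 0)
    (hv : 4 / (h : ℂ) ^ 2 - z ≠ 0) :
    csqrt (1 - ((h / 2 : ℂ) * csqrt z) ^ 2) = (h / 2 : ℂ) * csqrt (4 / (h : ℂ) ^ 2 - z) := by
  have hh0 : (h : ℂ) ≠ 0 := Complex.ofReal_ne_zero.2 hh.ne'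
  have hw : 1 - ((h / 2 : ℂ) * csqrt z) ^ 2 = ((h / 2) ^ 2 : ℝ) * (4 / (h : ℂ) ^ 2 - z) := by
    rw [mul_pow, csqrt_sq hz]
    push_cast
    field_simp
    ring
  rw [hw, csqrt_ofReal_mul (by positivity) hv, Real.sqrt_sq (by positivity)]
  push_cast
  ring

lemma rker_eq_geometric {h : ℝ} (hh : 0 < h) {z : ℂ} (hz : 0 < z.im) :
    ∃ C q : ℂ, q ≠ 0 ∧ ‖q‖ < 1 ∧ q + q⁻¹ = 2 - h ^ 2 * z ∧ C * (q⁻¹ - q) = h ^ 2 ∧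
      ∀ k : ℤ, rker h z k = C * q ^ k.natAbs := by
  have hz0 : z ≠ 0 := fun h0 => by simp [h0] at hz
  have hh0 : (h : ℂ) ≠ 0 := Complex.ofReal_ne_zero.2 hh.ne'
  set Z := csqrt z
  have hZ2 : Z ^ 2 = z := csqrt_sq hz0
  have hZ_re : 0 < Z.re := csqrt_re_pos (Complex.mem_slitPlane_iff.2 (Or.inr hz.ne'))
  have hZ_im : 0 < Z.im := by nlinarith [im_eq_two_mul_re_mul_im_csqrt hz0]
  set s := (h / 2 : ℂ) * Z
  have hs_re : 0 < s.re := by simp [s, Complex.mul_re]; positivity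
  have hs_im : 0 < s.im := by simp [s, Complex.mul_im]; positivity
  have hw_im : (1 - s ^ 2).im < 0 := by simp [sq, Complex.mul_im]; nlinarith
  have hw0 : 1 - s ^ 2 ≠ 0 := fun h0 => by simp [h0] at hw_im
  set a := csqrt (1 - s ^ 2)
  have ha2 : a ^ 2 = 1 - s ^ 2 := csqrt_sq hw0
  have ha_re : 0 < a.re := csqrt_re_pos (Complex.mem_slitPlane_iff.2 (Or.inr hw_im.ne))
  have ha_im : a.im < 0 := by nlinarith [im_eq_two_mul_re_mul_im_csqrt hw0]
  set V := csqrt (4 / (h : ℂ) ^ 2 - z)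
  have hv0 : 4 / (h : ℂ) ^ 2 - z ≠ 0 := fun h0 => by
    simpa [← Complex.ofReal_ofNat, ← Complex.ofReal_pow, ← Complex.ofReal_div, hz.ne']
      using congrArg Complex.im h0
  have haV : a = (h / 2 : ℂ) * V := csqrt_one_sub_sq_half_mul_csqrt hh hz0 hv0
  set u := Complex.I * s + a
  have huB : u * (a - Complex.I * s) = 1 := by linear_combination ha2 - s ^ 2 * Complex.I_sq
  have hu0 : u ≠ 0 := left_ne_zero_of_mul_eq_one huB
  have hq_inv : (u ^ 2)⁻¹ = (a - Complex.I * s) ^ 2 := by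
    rw [← inv_pow, inv_eq_of_mul_eq_one_right huB]
  refine ⟨Complex.I / (Z * V), u ^ 2, pow_ne_zero 2 hu0, ?_, ?_, ?_, fun k => ?_⟩
  · rw [norm_pow]
    exact pow_lt_one₀ (norm_nonneg u) (norm_I_mul_add_lt_one hs_re hs_im ha_re ha_im ha2)
      two_ne_zero
  · rw [hq_inv]
    linear_combination 2 * ha2 + 2 * s ^ 2 * Complex.I_sq - (h : ℂ) ^ 2 * hZ2
  · have hdiff : (a - Complex.I * s) ^ 2 - u ^ 2 = -Complex.I * h ^ 2 * (Z * V) := by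
      simp only [u, s]
      rw [haV]
      ring
    have hZ0 : Z ≠ 0 := csqrt_ne_zero z
    have hV0 : V ≠ 0 := csqrt_ne_zero _
    rw [hq_inv, hdiff]
    field_simp
    linear_combination -Complex.I_sq
  · rw [rker, Int.abs_eq_natAbs, Int.cast_natCast, exp_two_mul_I_mul_carcsin hu0]
    ring

lemma summable_norm_rker {h : ℝ} (hh : 0 < h) {z : ℂ} (hz : 0 < z.im) :
    Summable fun k => ‖rker h z k‖ := by
  obtain ⟨C, q, -, hq, -, -, hr⟩ := rker_eq_geometric hh hz
  simp_rw [hr, norm_mul, norm_pow]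
  have hgeom := summable_geometric_of_lt_one (norm_nonneg q) hq
  exact (Summable.of_nat_of_neg (by simpa using hgeom) (by simpa using hgeom)).mul_left ‖C‖

lemma rker_recurrence {h : ℝ} (hh : 0 < h) {z : ℂ} (hz : 0 < z.im) (k : ℤ) :
    (2 * ((h : ℂ) ^ 2)⁻¹ - z) * rker h z k + -((h : ℂ) ^ 2)⁻¹ * rker h z (k - 1)
      + -((h : ℂ) ^ 2)⁻¹ * rker h z (k + 1) = if k = 0 then 1 else 0 := by
  have hh0 : (h : ℂ) ≠ 0 := Complex.ofReal_ne_zero.2 hh.ne'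
  obtain ⟨C, q, hq0, -, hsum, hdiff, hr⟩ := rker_eq_geometric hh hz
  have hpow := pow_natAbs_add_pow_natAbs hq0 k
  rw [hr, hr, hr]
  split_ifs at hpow ⊢
  · field_simp
    linear_combination (-C) * hpow - q ^ k.natAbs * C * hsum + hdiff
  · field_simp
    linear_combination (-C) * hpow - q ^ k.natAbs * C * hsum

section LaurentSeries

variable {𝕜 A : Type*} [NormedField 𝕜] [NormedRing A] [NormedAlgebra 𝕜 A] {S : ℤ → A}
  {r : ℤ → 𝕜} {R : A}

lemma hasSum_smul_mul_of_add (hS : ∀ a b, S (a + b) = S a * S b)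
    (hR : HasSum (fun k => r k • S k) R) (j : ℤ) :
    HasSum (fun k => r (k - j) • S k) (R * S j) := by
  have h := hR.mul_right (S j)
  simp only [smul_mul_assoc, ← hS] at h
  rw [← (Equiv.addRight j).hasSum_iff]
  simpa [Function.comp_def] using h

lemma hasSum_mul_smul_of_add (hS : ∀ a b, S (a + b) = S a * S b)
    (hR : HasSum (fun k => r k • S k) R) (j : ℤ) :
    HasSum (fun k => r (k - j) • S k) (S j * R) := by
  have h := hR.mul_left (S j)
  simp only [mul_smul_comm, ← hS] at h
  rw [← (Equiv.addRight j).hasSum_iff]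
  simpa [Function.comp_def, add_comm] using h

lemma hasSum_three_term {M : ℤ → A} (hM : ∀ j, HasSum (fun k => r (k - j) • S k) (M j))
    (α β γ : 𝕜) :
    HasSum (fun k => (α * r k + β * r (k - 1) + γ * r (k + 1)) • S k)
      (α • M 0 + β • M 1 + γ • M (-1)) := by
  convert (((hM 0).const_smul α).add ((hM 1).const_smul β)).add ((hM (-1)).const_smul γ) using 1
  funext k
  simp [add_smul, mul_smul]

theorem three_term_inverse_of_recurrence (hS : ∀ a b, S (a + b) = S a * S b) (hS0 : S 0 = 1)
    (hR : HasSum (fun k => r k • S k) R) {α β γ : 𝕜}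
    (hrec : ∀ k, α * r k + β * r (k - 1) + γ * r (k + 1) = if k = 0 then 1 else 0) :
    R * (α • 1 + β • S 1 + γ • S (-1)) = 1 ∧ (α • 1 + β • S 1 + γ • S (-1)) * R = 1 := by
  have hδ : HasSum (fun k => (α * r k + β * r (k - 1) + γ * r (k + 1)) • S k) 1 := by
    simp_rw [hrec, ite_smul, one_smul, zero_smul]
    convert hasSum_ite_eq (0 : ℤ) (1 : A) using 2 with k
    split_ifs with hk <;> simp [hk, hS0]
  constructor
  · calc R * (α • 1 + β • S 1 + γ • S (-1))
        = α • (R * S 0) + β • (R * S 1) + γ • (R * S (-1)) := by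
          simp [hS0, mul_add]
      _ = 1 := (hasSum_three_term (hasSum_smul_mul_of_add hS hR) α β γ).unique hδ
  · calc (α • 1 + β • S 1 + γ • S (-1)) * R
        = α • (S 0 * R) + β • (S 1 * R) + γ • (S (-1) * R) := by
          simp [hS0, add_mul]
      _ = 1 := (hasSum_three_term (hasSum_mul_smul_of_add hS hR) α β γ).unique hδ

end LaurentSeries

section Shift

variable {𝕜 E : Type*} [NontriviallyNormedField 𝕜] [NormedAddCommGroup E] [NormedSpace 𝕜 E]

lemma memℓp_two_comp_sub (φ : lp (fun _ : ℤ => E) 2) (a : ℤ) :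
    Memℓp (fun n => φ (n - a)) 2 := by
  apply memℓp_gen
  exact (Equiv.subRight a).summable_iff.2 ((lp.memℓp φ).summable (by norm_num))

variable (𝕜 E) in
noncomputable def lpShift (a : ℤ) : lp (fun _ : ℤ => E) 2 →L[𝕜] lp (fun _ : ℤ => E) 2 :=
  LinearMap.mkContinuous
    { toFun φ := ⟨fun n => φ (n - a), memℓp_two_comp_sub φ a⟩
      map_add' _ _ := rfl
      map_smul' _ _ := rfl } 1
    (fun φ => by
      rw [one_mul, lp.norm_eq_tsum_rpow (by norm_num), lp.norm_eq_tsum_rpow (by norm_num)]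
      exact le_of_eq (congrArg (· ^ _)
        ((Equiv.subRight a).tsum_eq (fun n => ‖φ n‖ ^ (2 : ℝ≥0∞).toReal))))

@[simp]
lemma lpShift_apply (a : ℤ) (φ : lp (fun _ : ℤ => E) 2) (n : ℤ) :
    lpShift 𝕜 E a φ n = φ (n - a) := rfl

lemma lpShift_add (a b : ℤ) : lpShift 𝕜 E (a + b) = lpShift 𝕜 E a * lpShift 𝕜 E b := by
  ext φ n
  simp [sub_sub]

lemma lpShift_zero : lpShift 𝕜 E 0 = 1 := by
  ext φ n
  simp

lemma norm_lpShift_le (a : ℤ) : ‖lpShift 𝕜 E a‖ ≤ 1 :=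
  LinearMap.mkContinuous_norm_le _ zero_le_one _

end Shift

section Convolution

variable {𝕜 E : Type*} [NontriviallyNormedField 𝕜] [NormedAddCommGroup E] [NormedSpace 𝕜 E]
  {r : ℤ → 𝕜}

lemma summable_smul_lpShift [CompleteSpace E] (hr : Summable fun k => ‖r k‖) :
    Summable fun k => r k • lpShift 𝕜 E k :=
  .of_norm_bounded hr fun k => by
    rw [norm_smul]
    exact mul_le_of_le_one_right (norm_nonneg _) (norm_lpShift_le k)

lemma summable_norm_smul_sub (hr : Summable fun k => ‖r k‖) (φ : lp (fun _ : ℤ => E) 2)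
    (n : ℤ) : Summable fun m => ‖r (n - m) • φ m‖ := by
  have hr' : Summable fun m => ‖r (n - m)‖ := (Equiv.subLeft n).summable_iff.2 hr
  refine .of_nonneg_of_le (fun m => norm_nonneg _) (fun m => ?_) (hr'.mul_right ‖φ‖)
  exact (norm_smul_le _ _).trans
    (mul_le_mul_of_nonneg_left (lp.norm_apply_le_norm two_ne_zero φ m) (norm_nonneg _))

lemma tsum_smul_lpShift_apply [CompleteSpace E] (hr : Summable fun k => ‖r k‖)
    (φ : lp (fun _ : ℤ => E) 2) (n : ℤ) :
    (∑' k, r k • lpShift 𝕜 E k) φ n = ∑' m, r (n - m) • φ m := by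
  let ev : (lp (fun _ : ℤ => E) 2 →L[𝕜] lp (fun _ : ℤ => E) 2) →L[𝕜] E :=
    (lp.evalCLM 𝕜 (fun _ : ℤ => E) 2 n).comp (ContinuousLinearMap.apply 𝕜 _ φ)
  calc (∑' k, r k • lpShift 𝕜 E k) φ n = ev (∑' k, r k • lpShift 𝕜 E k) := rfl
    _ = ∑' k, r k • φ (n - k) := ev.map_tsum (summable_smul_lpShift hr)
    _ = ∑' m, r (n - m) • φ m := by
      rw [← (Equiv.subLeft n).tsum_eq]
      simp

end Convolution

/-- For `Im z > 0` the operator `−Δ_h − z` on `ℓ²(ℤ, ℂ)` is boundedly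
invertible, and its inverse is the convolution operator with kernel `r_h`. -/
theorem stmt_4 (h : ℝ) (hh : 0 < h) (z : ℂ) (hz : 0 < z.im)
    (H : lp (fun _ : ℤ => ℂ) 2 →L[ℂ] lp (fun _ : ℤ => ℂ) 2)
    (hH : ∀ (φ : lp (fun _ : ℤ => ℂ) 2) (n : ℤ),
      H φ n = ((h : ℂ) ^ 2)⁻¹ * (2 * φ n - φ (n + 1) - φ (n - 1))) :
    ∃ R : lp (fun _ : ℤ => ℂ) 2 →L[ℂ] lp (fun _ : ℤ => ℂ) 2,
      (H - z • 1) ∘L R = 1 ∧ R ∘L (H - z • 1) = 1 ∧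
      ∀ (φ : lp (fun _ : ℤ => ℂ) 2) (n : ℤ),
        Summable (fun m : ℤ => ‖rker h z (n - m) * φ m‖) ∧
        R φ n = ∑' m : ℤ, rker h z (n - m) * φ m := by
  have hr := summable_norm_rker hh hz
  have hHz : H - z • 1 = (2 * ((h : ℂ) ^ 2)⁻¹ - z) • 1 + -((h : ℂ) ^ 2)⁻¹ • lpShift ℂ ℂ 1
      + -((h : ℂ) ^ 2)⁻¹ • lpShift ℂ ℂ (-1) := by
    ext φ n
    simp only [add_apply, sub_apply, smul_apply, one_apply_eq_self, lp.coeFn_sub, lp.coeFn_add,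
      lp.coeFn_smul, Pi.sub_apply, Pi.add_apply, Pi.smul_apply, smul_eq_mul, lpShift_apply,
      sub_neg_eq_add, hH]
    ring
  have hR : HasSum (fun k => rker h z k • lpShift ℂ ℂ k) (∑' k, rker h z k • lpShift ℂ ℂ k) :=
    (summable_smul_lpShift hr).hasSum
  obtain ⟨hRH, hHR⟩ := three_term_inverse_of_recurrence lpShift_add lpShift_zero hR
    (rker_recurrence hh hz)
  refine ⟨∑' k, rker h z k • lpShift ℂ ℂ k, by rw [hHz]; exact hHR, by rw [hHz]; exact hRH,
    fun φ n => ⟨summable_norm_smul_sub hr φ n, tsum_smul_lpShift_apply hr φ n⟩⟩
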